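/- Let (F_p)_{p∈P} be a family of C^r-skew-products satisfying assumption (U). For every ε > 0 there exist δ > 0 and D₅ > 0 such that for all p₁, p₂ in the closure of P with ‖p₁ − p₂‖ < δ, all 𝔞₁, 𝔞₂ ∈ 𝒜^ℕ and every finite word ρ ∈ 𝒜^*: Λ_{p₁,𝔞₁,ρ}^{1 + ε/(2N)} ≤ D₅·Λ_{p₂,𝔞₂,ρ}. -/

import Mathlib

open Filter MeasureTheory Set
open scoped Topology ENNReal NNReal

set_option synthInstance.maxHeartbeats 1000000
set_option maxHeartbeats 1000000

noncomputable section

namespace Paper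

abbrev E (n : ℕ) : Type := EuclideanSpace ℝ (Fin n)

def cube (N : ℕ) : Set (E N) := {x | ∀ i, x i ∈ Icc (-1:ℝ) 1}

def cubeO (d : ℕ) : Set (E d) := {p | ∀ i, p i ∈ Ioo (-1:ℝ) 1}

variable {A : Type}

def consF (a : A) (𝔞 : ℕ → A) : ℕ → A := fun n =>
  match n with
  | 0 => a
  | Nat.succ k => 𝔞 k

def app : List A → (ℕ → A) → ℕ → A
  | [], 𝔞 => 𝔞
  | a :: w, 𝔞 => app w (consF a 𝔞)

def trunc (α : ℕ → A) (n : ℕ) : List A := List.ofFn fun i : Fin n => α i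

def cyl (w : List A) : Set (ℕ → A) := {α | ∀ i : Fin w.length, α i = w.get i}

variable {N d : ℕ}

def psi (f : E d → (ℕ → A) → E N → E N) (p : E d) : List A → (ℕ → A) → E N → E N
  | [], _ => id
  | a :: w, 𝔞 => f p (consF a 𝔞) ∘ psi f p w (consF a 𝔞)

def dentry (g : E N → E N) (x : E N) (i j : Fin N) : ℝ :=
  fderiv ℝ g x (EuclideanSpace.single j (1:ℝ)) i

def lam (hN : 0 < N) (f : E d → (ℕ → A) → E N → E N) (p : E d) (𝔞 : ℕ → A)
    (w : List A) (x : E N) : ℝ :=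
  |dentry (psi f p w 𝔞) x ⟨0, hN⟩ ⟨0, hN⟩|

def Lam (hN : 0 < N) (f : E d → (ℕ → A) → E N → E N) (p : E d) (𝔞 : ℕ → A)
    (w : List A) : ℝ :=
  sSup ((fun x => lam hN f p 𝔞 w x) '' cube N)

def piProj (f : E d → (ℕ → A) → E N → E N) (p : E d) (𝔞 α : ℕ → A) : E N :=
  limUnder atTop fun n => psi f p (trunc α n) 𝔞 0

def Mop (g : E N → E N) : ℝ := sSup ((fun x => ‖fderiv ℝ g x‖) '' cube N)

def pressure [Fintype A] (f : E d → (ℕ → A) → E N → E N) (p : E d) (𝔞 : ℕ → A) (s : ℝ) : ℝ :=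
  limUnder atTop fun n : ℕ =>
    (1 / n : ℝ) * Real.log (∑ w : Fin n → A, Mop (psi f p (List.ofFn w) 𝔞) ^ s)

structure SkewFamily (A : Type) (N d : ℕ) (r : ℕ∞) where
  f : E d → (ℕ → A) → E N → E N
  X' : Set (E N)
  P' : Set (E d)
  X'_open : IsOpen X'
  X_subset : cube N ⊆ X'
  P'_open : IsOpen P'
  P_subset : closure (cubeO d) ⊆ P'
  smooth : ∀ 𝔞 : ℕ → A, ContDiffOn ℝ r (fun q : E d × E N => f q.1 𝔞 q.2) (P' ×ˢ X')
  inj : ∀ 𝔞 : ℕ → A, ∀ p ∈ P', Set.InjOn (f p 𝔞) X'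
  into : ∀ 𝔞 : ℕ → A, ∀ p ∈ P', f p 𝔞 '' X' ⊆ cube N
  holder0 : ∃ C > (0:ℝ), ∃ θ ∈ Set.Ioo (0:ℝ) 1, ∀ p ∈ P', ∀ (𝔞 𝔟 : ℕ → A) (q : ℕ),
      (∀ i < q, 𝔞 i = 𝔟 i) → ∀ x ∈ X', ‖f p 𝔞 x - f p 𝔟 x‖ ≤ C * θ ^ q
  holder1 : ∃ C > (0:ℝ), ∃ θ ∈ Set.Ioo (0:ℝ) 1, ∀ p ∈ P', ∀ (𝔞 𝔟 : ℕ → A) (q : ℕ),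
      (∀ i < q, 𝔞 i = 𝔟 i) → ∀ x ∈ X',
      ‖fderiv ℝ (f p 𝔞) x - fderiv ℝ (f p 𝔟) x‖ ≤ C * θ ^ q
  cont2 : ∀ p ∈ P', ∀ 𝔞 : ℕ → A, ∀ ε > (0:ℝ), ∃ q : ℕ, ∀ 𝔟 : ℕ → A,
      (∀ i < q, 𝔞 i = 𝔟 i) → ∀ x ∈ X',
      ‖iteratedFDeriv ℝ 2 (f p 𝔞) x - iteratedFDeriv ℝ 2 (f p 𝔟) x‖ ≤ ε

def UnipOn (hN : 0 < N) (f : E d → (ℕ → A) → E N → E N)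
    (P' : Set (E d)) (X' : Set (E N)) : Prop :=
  ∀ p ∈ P', ∀ 𝔞 : ℕ → A, ∀ x ∈ X',
    (∀ i j : Fin N, (i : ℕ) < (j : ℕ) → dentry (f p 𝔞) x i j = 0) ∧
    (∀ i j : Fin N, dentry (f p 𝔞) x i i = dentry (f p 𝔞) x j j) ∧
    0 < |dentry (f p 𝔞) x ⟨0, hN⟩ ⟨0, hN⟩| ∧ |dentry (f p 𝔞) x ⟨0, hN⟩ ⟨0, hN⟩| < 1

def GammaBounds (hN : 0 < N) (f : E d → (ℕ → A) → E N → E N) (γ' γ : ℝ) : Prop :=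
  0 < γ' ∧ γ' < γ ∧ γ < 1 ∧
  ∀ p ∈ closure (cubeO d), ∀ (𝔞 : ℕ → A) (a : A), ∀ x ∈ cube N,
    γ' < lam hN f p 𝔞 [a] x ∧ lam hN f p 𝔞 [a] x < γ

structure ParamPerturb {A : Type} {N d : ℕ} {r : ℕ∞} (hN : 0 < N)
    (S : SkewFamily A N d r) (θ : ℝ) (τ : ℕ) where
  g : E τ → E d → (ℕ → A) → E N → E N
  jointSmooth : ∀ 𝔞 : ℕ → A, ContDiffOn ℝ r
      (fun q : E τ × E d × E N => g q.1 q.2.1 𝔞 q.2.2) ((cubeO τ) ×ˢ S.P' ×ˢ S.X')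
  smooth : ∀ t ∈ cubeO τ, ∀ 𝔞 : ℕ → A, ContDiffOn ℝ r
      (fun q : E d × E N => g t q.1 𝔞 q.2) (S.P' ×ˢ S.X')
  inj : ∀ t ∈ cubeO τ, ∀ 𝔞 : ℕ → A, ∀ p ∈ S.P', Set.InjOn (g t p 𝔞) S.X'
  into : ∀ t ∈ cubeO τ, ∀ 𝔞 : ℕ → A, ∀ p ∈ S.P', g t p 𝔞 '' S.X' ⊆ cube N
  close : ∃ θ' < θ, ∀ t ∈ cubeO τ, ∀ (𝔞 : ℕ → A) (k : ℕ), (k : ℕ∞) ≤ r →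
      ∀ p ∈ S.P', ∀ x ∈ S.X',
      ‖iteratedFDeriv ℝ k (fun q : E d × E N => S.f q.1 𝔞 q.2 - g t q.1 𝔞 q.2) (p, x)‖ ≤ θ'
  unip : ∀ t ∈ cubeO τ, UnipOn hN (g t) S.P' S.X'

def TransAssumption {A : Type} {N d : ℕ} {r : ℕ∞} (hN : 0 < N)
    (S : SkewFamily A N d r) : Prop :=
  ∃ C > (0:ℝ),
    (∀ 𝔞 α β : ℕ → A, α 0 ≠ β 0 → ∀ rr > (0:ℝ),
      volume {p ∈ cubeO d | ‖piProj S.f p 𝔞 α - piProj S.f p 𝔞 β‖ < rr}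
        ≤ ENNReal.ofReal (C * rr ^ N)) ∧
    ∃ θ₀ > (0:ℝ), ∀ θ : ℝ, 0 < θ → θ ≤ θ₀ → ∀ τ : ℕ, 0 < τ →
      ∀ Ft : ParamPerturb hN S θ τ, ∀ t ∈ cubeO τ,
      ∀ 𝔞 α β : ℕ → A, α 0 ≠ β 0 → ∀ rr > (0:ℝ),
        volume {p ∈ cubeO d | ‖piProj (Ft.g t) p 𝔞 α - piProj (Ft.g t) p 𝔞 β‖ < rr}
          ≤ ENNReal.ofReal (C * rr ^ N)

def dens {N : ℕ} (ν : Measure (E N)) (x : E N) : ℝ≥0∞ :=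
  liminf (fun rr : ℝ => ν (Metric.ball x rr) / volume (Metric.ball (0 : E N) rr)) (𝓝[>] (0:ℝ))

end Paper

namespace IFS

open Paper

variable {A : Type}

def psiA (c b : ℝ → A → ℝ) (p : ℝ) : List A → ℝ → ℝ
  | [], x => x
  | a :: w, x => c p a * psiA c b p w x + b p a

def piA (c b : ℝ → A → ℝ) (p : ℝ) (α : ℕ → A) : ℝ :=
  limUnder atTop fun n => psiA c b p (Paper.trunc α n) 0

def LamA (c : ℝ → A → ℝ) (p : ℝ) (w : List A) : ℝ := (w.map fun a => |c p a|).prod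

def IFSHyp (c b : ℝ → A → ℝ) (U : Set ℝ) : Prop :=
  IsOpen U ∧ Icc (-1:ℝ) 1 ⊆ U ∧
  (∀ a : A, ContinuousOn (fun p => c p a) U) ∧
  (∀ a : A, ContinuousOn (fun p => b p a) U) ∧
  (∀ p ∈ U, ∀ a : A, ∀ x ∈ Icc (-1:ℝ) 1, c p a * x + b p a ∈ Ioo (-1:ℝ) 1)

def GammaBoundsA (c : ℝ → A → ℝ) (γ' γ : ℝ) : Prop :=
  0 < γ' ∧ γ' < γ ∧ γ < 1 ∧ ∀ p ∈ Icc (-1:ℝ) 1, ∀ a : A, γ' < |c p a| ∧ |c p a| < γ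

def TransAff (c b : ℝ → A → ℝ) : Prop :=
  ∃ C > (0:ℝ), ∀ α β : ℕ → A, α 0 ≠ β 0 → ∀ rr > (0:ℝ),
    volume {p ∈ Ioo (-1:ℝ) 1 | |piA c b p α - piA c b p β| < rr} ≤ ENNReal.ofReal (C * rr)

def densR (ν : MeasureTheory.Measure ℝ) (x : ℝ) : ℝ≥0∞ :=
  liminf (fun rr : ℝ => ν (Ioo (x - rr) (x + rr)) / ENNReal.ofReal (2 * rr)) (𝓝[>] (0:ℝ))

end IFS

namespace Paper


section AuxBasic
variable {N d : ℕ}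

lemma coord_abs_le_norm (v : E N) (i : Fin N) : |v i| ≤ ‖v‖ := by
  rw [EuclideanSpace.norm_eq]
  have h1 : |v i| = Real.sqrt (‖v i‖ ^ 2) := by
    rw [Real.sqrt_sq_eq_abs, Real.norm_eq_abs, abs_abs]
  rw [h1]
  apply Real.sqrt_le_sqrt
  exact Finset.single_le_sum (f := fun j => ‖v j‖ ^ 2) (fun j _ => sq_nonneg _) (Finset.mem_univ i)

lemma euclid_decomp (v : E N) : v = ∑ i, v i • EuclideanSpace.single i (1:ℝ) := by
  have h := (EuclideanSpace.basisFun (Fin N) ℝ).sum_repr v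
  calc v = ∑ i, (EuclideanSpace.basisFun (Fin N) ℝ).repr v i • (EuclideanSpace.basisFun (Fin N) ℝ) i := h.symm
  _ = ∑ i, v i • EuclideanSpace.single i (1:ℝ) := by
      apply Finset.sum_congr rfl
      intro i _
      rw [EuclideanSpace.basisFun_repr, EuclideanSpace.basisFun_apply]

lemma norm_le_sum_abs (v : E N) : ‖v‖ ≤ ∑ i, |v i| := by
  conv_lhs => rw [euclid_decomp v]
  refine (norm_sum_le _ _).trans ?_
  apply Finset.sum_le_sum
  intro i _
  rw [norm_smul, EuclideanSpace.norm_single]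
  simp [Real.norm_eq_abs]

lemma convex_cube : Convex ℝ (cube N) := by
  intro x hx y hy a b ha hb hab
  intro i
  have := (convex_Icc (-1:ℝ) 1) (hx i) (hy i) ha hb hab
  simpa using this

lemma isClosed_cube : IsClosed (cube N) := by
  have : cube N = ⋂ i, (fun x : E N => x i) ⁻¹' (Icc (-1:ℝ) 1) := by
    ext x; simp [cube, mem_iInter]
  rw [this]
  exact isClosed_iInter fun i => (isClosed_Icc).preimage (EuclideanSpace.proj (𝕜 := ℝ) i).continuous

lemma isCompact_cube : IsCompact (cube N) := by
  apply Metric.isCompact_of_isClosed_isBounded isClosed_cube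
  rw [Metric.isBounded_iff_subset_closedBall 0]
  refine ⟨Real.sqrt N, fun x hx => ?_⟩
  simp only [Metric.mem_closedBall, dist_zero_right]
  rw [EuclideanSpace.norm_eq]
  have : (∑ i, ‖x i‖ ^ 2) ≤ (N : ℝ) := by
    calc (∑ i, ‖x i‖ ^ 2) ≤ ∑ _i : Fin N, (1:ℝ) := by
          apply Finset.sum_le_sum; intro i _
          have h := hx i
          have : |x i| ≤ 1 := abs_le.mpr ⟨h.1, h.2⟩
          calc ‖x i‖^2 = |x i|^2 := rfl
          _ ≤ 1 := by nlinarith [abs_nonneg (x i)]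
      _ = N := by simp
  exact Real.sqrt_le_sqrt this

lemma zero_mem_cube : (0 : E N) ∈ cube N := by
  intro i
  constructor <;> norm_num

lemma cubeO_subset_cube : cubeO d ⊆ cube d := fun p hp i => ⟨(hp i).1.le, (hp i).2.le⟩

lemma closure_cubeO_subset : closure (cubeO d) ⊆ cube d :=
  closure_minimal cubeO_subset_cube isClosed_cube

lemma geom_partial_le {g : ℝ} (h0 : 0 ≤ g) (h1 : g < 1) (n : ℕ) :
    ∑ j ∈ Finset.range n, g ^ j ≤ 1 / (1 - g) := by
  rw [le_div_iff₀ (by linarith)]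
  have := geom_sum_mul g n
  -- (∑ i in range n, g ^ i) * (g - 1) = g ^ n - 1
  nlinarith [pow_nonneg h0 n, this]


section AuxSkew
variable {A : Type}
variable {r : ℕ∞} (S : SkewFamily A N d r)

/-- joint map for fixed fiber -/
def Fj (𝔟 : ℕ → A) : E d × E N → E N := fun q => S.f q.1 𝔟 q.2

lemma one_le_r (hr : 2 ≤ r) : (1 : ℕ∞) ≤ r := le_trans (by norm_num) hr

lemma Fj_contDiffAt (𝔟 : ℕ → A) {p : E d} {x : E N} (hp : p ∈ S.P') (hx : x ∈ S.X') :
    ContDiffAt ℝ r (Fj S 𝔟) (p, x) :=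
  (S.smooth 𝔟).contDiffAt ((S.P'_open.prod S.X'_open).mem_nhds (by exact ⟨hp, hx⟩))

lemma slice_differentiableAt (hr : 2 ≤ r) (𝔟 : ℕ → A) {p : E d} {x : E N}
    (hp : p ∈ S.P') (hx : x ∈ S.X') : DifferentiableAt ℝ (S.f p 𝔟) x := by
  have h := (Fj_contDiffAt S 𝔟 hp hx).differentiableAt (by exact_mod_cast (lt_of_lt_of_le zero_lt_one (one_le_r hr)).ne')
  have hg : DifferentiableAt ℝ (fun y : E N => (p, y)) x :=
    (differentiableAt_const p).prodMk differentiableAt_id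
  exact h.comp x hg

lemma slice_fderiv_apply (hr : 2 ≤ r) (𝔟 : ℕ → A) {p : E d} {x : E N}
    (hp : p ∈ S.P') (hx : x ∈ S.X') (v : E N) :
    fderiv ℝ (S.f p 𝔟) x v = fderiv ℝ (Fj S 𝔟) (p, x) (0, v) := by
  have h := ((Fj_contDiffAt S 𝔟 hp hx).differentiableAt
    (by exact_mod_cast (lt_of_lt_of_le zero_lt_one (one_le_r hr)).ne')).hasFDerivAt
  have hg : HasFDerivAt (fun y : E N => (p, y))
      ((0 : E N →L[ℝ] E d).prod (ContinuousLinearMap.id ℝ (E N))) x :=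
    (hasFDerivAt_const p x).prodMk (hasFDerivAt_id x)
  have hc := h.comp x hg
  have : fderiv ℝ (S.f p 𝔟) x =
      (fderiv ℝ (Fj S 𝔟) (p, x)).comp ((0 : E N →L[ℝ] E d).prod (ContinuousLinearMap.id ℝ (E N))) :=
    hc.fderiv
  rw [this]
  rfl

lemma dentry_abs_le (g : E N → E N) (x : E N) (i j : Fin N) :
    |dentry g x i j| ≤ ‖fderiv ℝ g x‖ := by
  refine (coord_abs_le_norm _ i).trans ?_
  calc ‖fderiv ℝ g x (EuclideanSpace.single j (1:ℝ))‖
      ≤ ‖fderiv ℝ g x‖ * ‖EuclideanSpace.single j (1:ℝ)‖ := (fderiv ℝ g x).le_opNorm _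
    _ = ‖fderiv ℝ g x‖ := by rw [EuclideanSpace.norm_single]; simp

lemma dentry_sub_le (g h : E N → E N) (x : E N) (i j : Fin N) :
    |dentry g x i j - dentry h x i j| ≤ ‖fderiv ℝ g x - fderiv ℝ h x‖ := by
  have : dentry g x i j - dentry h x i j
      = ((fderiv ℝ g x - fderiv ℝ h x) (EuclideanSpace.single j (1:ℝ))) i := by
    simp [dentry, ContinuousLinearMap.sub_apply]
  rw [this]
  refine (coord_abs_le_norm _ i).trans ?_
  calc ‖(fderiv ℝ g x - fderiv ℝ h x) (EuclideanSpace.single j (1:ℝ))‖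
      ≤ ‖fderiv ℝ g x - fderiv ℝ h x‖ * ‖EuclideanSpace.single j (1:ℝ)‖ :=
        (fderiv ℝ g x - fderiv ℝ h x).le_opNorm _
    _ = ‖fderiv ℝ g x - fderiv ℝ h x‖ := by rw [EuclideanSpace.norm_single]; simp

lemma dentry_slice_continuousOn (hr : 2 ≤ r) (𝔟 : ℕ → A) (i j : Fin N) :
    ContinuousOn (fun q : E d × E N => dentry (S.f q.1 𝔟) q.2 i j) (S.P' ×ˢ S.X') := by
  have hopen := S.P'_open.prod S.X'_open
  have hc : ContinuousOn (fderiv ℝ (Fj S 𝔟)) (S.P' ×ˢ S.X') :=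
    (S.smooth 𝔟).continuousOn_fderiv_of_isOpen hopen (by exact_mod_cast one_le_r hr)
  have hc2 : ContinuousOn
      (fun q : E d × E N => fderiv ℝ (Fj S 𝔟) q ((0 : E d), EuclideanSpace.single j (1:ℝ)))
      (S.P' ×ˢ S.X') := hc.clm_apply continuousOn_const
  have hc3 : ContinuousOn
      (fun q : E d × E N =>
        (fderiv ℝ (Fj S 𝔟) q ((0 : E d), EuclideanSpace.single j (1:ℝ))) i)
      (S.P' ×ˢ S.X') := by
    exact (EuclideanSpace.proj (𝕜 := ℝ) i).continuous.comp_continuousOn hc2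
  refine ContinuousOn.congr hc3 ?_
  intro q hq
  rcases hq with ⟨hq1, hq2⟩
  simp only [dentry]
  rw [slice_fderiv_apply S hr 𝔟 hq1 hq2]

lemma f_value_continuousOn (𝔟 : ℕ → A) :
    ContinuousOn (fun q : E d × E N => S.f q.1 𝔟 q.2) (S.P' ×ˢ S.X') :=
  (S.smooth 𝔟).continuousOn

end AuxSkew
end AuxBasic

section AuxPsi
variable {N d : ℕ}

section Psi

variable {A : Type} {r : ℕ∞} (S : SkewFamily A N d r)

lemma psi_mem_cube {p : E d} (hp : p ∈ S.P') :
    ∀ (w : List A) (𝔞 : ℕ → A) {x : E N}, x ∈ cube N → psi S.f p w 𝔞 x ∈ cube N := by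
  intro w
  induction w with
  | nil => intro 𝔞 x hx; exact hx
  | cons a w ih =>
    intro 𝔞 x hx
    exact S.into _ p hp ⟨_, S.X_subset (ih _ hx), rfl⟩

lemma psi_differentiableAt (hr : 2 ≤ r) {p : E d} (hp : p ∈ S.P') :
    ∀ (w : List A) (𝔞 : ℕ → A) {x : E N}, x ∈ cube N →
      DifferentiableAt ℝ (psi S.f p w 𝔞) x := by
  intro w
  induction w with
  | nil => intro 𝔞 x _; exact differentiableAt_id
  | cons a w ih =>
    intro 𝔞 x hx
    exact (slice_differentiableAt S hr _ hp
      (S.X_subset (psi_mem_cube S hp w _ hx))).comp x (ih _ hx)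

lemma coord_sum (c : Fin N → ℝ) (u : Fin N → E N) (k : Fin N) :
    (∑ l, c l • u l) k = ∑ l, c l * u l k := by
  have h := map_sum (EuclideanSpace.proj (𝕜 := ℝ) k) (fun l => c l • u l) Finset.univ
  have h2 : (EuclideanSpace.proj (𝕜 := ℝ) k) (∑ l, c l • u l) = (∑ l, c l • u l) k := rfl
  rw [← h2, h]
  apply Finset.sum_congr rfl
  intro l _
  rw [_root_.map_smul]
  rfl

lemma dentry_comp (g h : E N → E N) (x : E N)
    (hg : DifferentiableAt ℝ g (h x)) (hh : DifferentiableAt ℝ h x) (i j : Fin N) :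
    dentry (g ∘ h) x i j = ∑ l, dentry g (h x) i l * dentry h x l j := by
  have hcomp : fderiv ℝ (g ∘ h) x = (fderiv ℝ g (h x)).comp (fderiv ℝ h x) :=
    fderiv_comp x hg hh
  have hv : fderiv ℝ h x (EuclideanSpace.single j (1:ℝ))
      = ∑ l, dentry h x l j • EuclideanSpace.single l (1:ℝ) :=
    euclid_decomp _
  have step1 : dentry (g ∘ h) x i j
      = (fderiv ℝ g (h x) (fderiv ℝ h x (EuclideanSpace.single j (1:ℝ)))) i := by
    unfold dentry
    rw [hcomp]
    rfl
  have step2 := congrArg (fun v => (fderiv ℝ g (h x) v) i) hv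
  simp only at step2
  have step3 : fderiv ℝ g (h x) (∑ l, dentry h x l j • EuclideanSpace.single l (1:ℝ))
      = ∑ l, dentry h x l j • fderiv ℝ g (h x) (EuclideanSpace.single l (1:ℝ)) := by
    rw [map_sum]
    apply Finset.sum_congr rfl
    intro l _
    rw [_root_.map_smul]
  rw [step1, step2, step3, coord_sum (fun l => dentry h x l j)
    (fun l => fderiv ℝ g (h x) (EuclideanSpace.single l (1:ℝ))) i]
  apply Finset.sum_congr rfl
  intro l _
  rw [mul_comm]
  rfl

lemma consF_eta (𝔟 : ℕ → A) : consF (𝔟 0) (fun n => 𝔟 (n+1)) = 𝔟 := by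
  funext n
  cases n <;> rfl

lemma psi_single (p : E d) (𝔟 : ℕ → A) :
    psi S.f p [𝔟 0] (fun n => 𝔟 (n+1)) = S.f p 𝔟 := by
  show S.f p (consF (𝔟 0) (fun n => 𝔟 (n+1))) ∘ id = S.f p 𝔟
  rw [Function.comp_id, consF_eta]

lemma Phi_bounds (hN : 0 < N) {γ' γ : ℝ} (hγ : GammaBounds hN S.f γ' γ)
    {p : E d} (hp : p ∈ closure (cubeO d)) (𝔟 : ℕ → A) {y : E N} (hy : y ∈ cube N) :
    γ' < |dentry (S.f p 𝔟) y ⟨0, hN⟩ ⟨0, hN⟩| ∧ |dentry (S.f p 𝔟) y ⟨0, hN⟩ ⟨0, hN⟩| < γ := by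
  have h := hγ.2.2.2 p hp (fun n => 𝔟 (n+1)) (𝔟 0) y hy
  rw [lam, psi_single] at h
  exact h

lemma dentry_diag_lt (hN : 0 < N) (hU : UnipOn hN S.f S.P' S.X') {γ' γ : ℝ}
    (hγ : GammaBounds hN S.f γ' γ) {p : E d} (hp : p ∈ closure (cubeO d)) (𝔟 : ℕ → A)
    {y : E N} (hy : y ∈ cube N) (i : Fin N) :
    |dentry (S.f p 𝔟) y i i| < γ := by
  have h := (hU p (S.P_subset hp) 𝔟 y (S.X_subset hy)).2.1 i ⟨0, hN⟩
  rw [h]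
  exact (Phi_bounds S hN hγ hp 𝔟 hy).2

lemma dentry_id (x : E N) (i j : Fin N) :
    dentry (id : E N → E N) x i j = if i = j then 1 else 0 := by
  unfold dentry
  rw [fderiv_id]
  show EuclideanSpace.single j (1:ℝ) i = _
  rw [EuclideanSpace.single_apply]

lemma lam_nil (hN : 0 < N) (f : E d → (ℕ → A) → E N → E N) (p : E d) (𝔞 : ℕ → A) (x : E N) :
    lam hN f p 𝔞 [] x = 1 := by
  unfold lam
  show |dentry (id : E N → E N) x _ _| = 1
  rw [dentry_id]
  simp

lemma lam_cons (hN : 0 < N) (hr : 2 ≤ r) (hU : UnipOn hN S.f S.P' S.X')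
    {p : E d} (hp : p ∈ closure (cubeO d)) (a : A) (w : List A) (𝔞 : ℕ → A)
    {x : E N} (hx : x ∈ cube N) :
    lam hN S.f p 𝔞 (a :: w) x =
      |dentry (S.f p (consF a 𝔞)) (psi S.f p w (consF a 𝔞) x) ⟨0, hN⟩ ⟨0, hN⟩| *
        lam hN S.f p (consF a 𝔞) w x := by
  have hp' := S.P_subset hp
  have hmem := psi_mem_cube S hp' w (consF a 𝔞) hx
  have hcomp : psi S.f p (a :: w) 𝔞 = S.f p (consF a 𝔞) ∘ psi S.f p w (consF a 𝔞) := rfl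
  unfold lam
  rw [hcomp, dentry_comp _ _ x (slice_differentiableAt S hr _ hp' (S.X_subset hmem))
    (psi_differentiableAt S hr hp' w _ hx)]
  rw [Finset.sum_eq_single (⟨0, hN⟩ : Fin N), abs_mul]
  · intro l _ hl
    have hlt : (0 : ℕ) < (l : ℕ) := by
      rcases Nat.eq_zero_or_pos (l : ℕ) with h0 | h0
      · exact absurd (Fin.ext h0 : l = ⟨0, hN⟩) hl
      · exact h0
    have := (hU p hp' (consF a 𝔞) _ (S.X_subset hmem)).1 ⟨0, hN⟩ l hlt
    rw [this, zero_mul]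
  · intro h; exact absurd (Finset.mem_univ _) h

lemma lam_bounds (hN : 0 < N) (hr : 2 ≤ r) (hU : UnipOn hN S.f S.P' S.X')
    {γ' γ : ℝ} (hγ : GammaBounds hN S.f γ' γ)
    {p : E d} (hp : p ∈ closure (cubeO d)) :
    ∀ (w : List A) (𝔞 : ℕ → A) {x : E N}, x ∈ cube N →
      γ' ^ w.length ≤ lam hN S.f p 𝔞 w x ∧ lam hN S.f p 𝔞 w x ≤ γ ^ w.length := by
  intro w
  induction w with
  | nil => intro 𝔞 x _; rw [lam_nil]; simp
  | cons a w ih =>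
    intro 𝔞 x hx
    have hb := Phi_bounds S hN hγ hp (consF a 𝔞) (psi_mem_cube S (S.P_subset hp) w (consF a 𝔞) hx)
    have hih := ih (consF a 𝔞) hx
    rw [lam_cons S hN hr hU hp a w 𝔞 hx]
    have hγ'0 : (0:ℝ) < γ' := hγ.1
    constructor
    · rw [List.length_cons, pow_succ, mul_comm (γ' ^ w.length) γ']
      apply mul_le_mul hb.1.le hih.1 (pow_nonneg hγ'0.le _) (abs_nonneg _)
    · rw [List.length_cons, pow_succ, mul_comm (γ ^ w.length) γ]
      apply mul_le_mul hb.2.le hih.2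
        (le_trans (pow_nonneg hγ'0.le _) hih.1) (hγ'0.trans hγ.2.1).le


lemma R_exists (hr : 2 ≤ r) (𝔟₀ : ℕ → A) :
    ∃ R : ℝ, 1 ≤ R ∧ ∀ p ∈ closure (cubeO d), ∀ (𝔟 : ℕ → A), ∀ x ∈ cube N, ∀ i j : Fin N,
      |dentry (S.f p 𝔟) x i j| ≤ R := by
  obtain ⟨C₁, hC₁, θ₁, hθ₁, hH⟩ := S.holder1
  have hKd : IsCompact (closure (cubeO d)) :=
    isCompact_cube.of_isClosed_subset isClosed_closure closure_cubeO_subset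
  have hK : IsCompact ((closure (cubeO d)) ×ˢ cube N) := hKd.prod isCompact_cube
  have hsub : (closure (cubeO d)) ×ˢ cube N ⊆ S.P' ×ˢ S.X' :=
    Set.prod_mono S.P_subset S.X_subset
  have hc : ContinuousOn (fderiv ℝ (Fj S 𝔟₀)) ((closure (cubeO d)) ×ˢ cube N) :=
    ((S.smooth 𝔟₀).continuousOn_fderiv_of_isOpen (S.P'_open.prod S.X'_open)
      (by exact_mod_cast one_le_r hr)).mono hsub
  obtain ⟨C₂, hC₂⟩ := hK.exists_bound_of_continuousOn hc
  refine ⟨|C₂| + C₁ + 1, by linarith [abs_nonneg C₂], ?_⟩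
  intro p hp 𝔟 x hx i j
  have hp' := S.P_subset hp
  have hx' := S.X_subset hx
  have h1 : |dentry (S.f p 𝔟) x i j - dentry (S.f p 𝔟₀) x i j| ≤ C₁ := by
    have := dentry_sub_le (S.f p 𝔟) (S.f p 𝔟₀) x i j
    refine this.trans ?_
    have := hH p hp' 𝔟 𝔟₀ 0 (by intro i h; omega) x hx'
    simpa using this
  have h2 : |dentry (S.f p 𝔟₀) x i j| ≤ |C₂| := by
    refine (dentry_abs_le _ _ _ _).trans ?_
    have heq : fderiv ℝ (S.f p 𝔟₀) x =
        (fderiv ℝ (Fj S 𝔟₀) (p, x)).comp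
          ((0 : E N →L[ℝ] E d).prod (ContinuousLinearMap.id ℝ (E N))) := by
      have h := ((Fj_contDiffAt S 𝔟₀ hp' hx').differentiableAt
        (by exact_mod_cast (lt_of_lt_of_le zero_lt_one (one_le_r hr)).ne')).hasFDerivAt
      have hg : HasFDerivAt (fun y : E N => (p, y))
          ((0 : E N →L[ℝ] E d).prod (ContinuousLinearMap.id ℝ (E N))) x :=
        (hasFDerivAt_const p x).prodMk (hasFDerivAt_id x)
      exact (h.comp x hg).fderiv
    rw [heq]
    refine (ContinuousLinearMap.opNorm_comp_le _ _).trans ?_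
    have hb : ‖((0 : E N →L[ℝ] E d).prod (ContinuousLinearMap.id ℝ (E N)))‖ ≤ 1 := by
      apply ContinuousLinearMap.opNorm_le_bound _ zero_le_one
      intro v
      rw [one_mul]
      have : ‖((0 : E N →L[ℝ] E d).prod (ContinuousLinearMap.id ℝ (E N))) v‖
          = max ‖(0 : E d)‖ ‖v‖ := by
        rw [Prod.norm_def]
        rfl
      rw [this]
      simp
    have hF : ‖fderiv ℝ (Fj S 𝔟₀) (p, x)‖ ≤ |C₂| :=
      (hC₂ (p, x) ⟨hp, hx⟩).trans (le_abs_self _)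
    calc ‖fderiv ℝ (Fj S 𝔟₀) (p, x)‖ * ‖((0 : E N →L[ℝ] E d).prod (ContinuousLinearMap.id ℝ (E N)))‖
        ≤ |C₂| * 1 := mul_le_mul hF hb (norm_nonneg _) (abs_nonneg _)
      _ = |C₂| := mul_one _
  calc |dentry (S.f p 𝔟) x i j|
      ≤ |dentry (S.f p 𝔟) x i j - dentry (S.f p 𝔟₀) x i j| + |dentry (S.f p 𝔟₀) x i j| := by
        have := abs_sub_abs_le_abs_sub (dentry (S.f p 𝔟) x i j) (dentry (S.f p 𝔟₀) x i j)
        linarith [abs_nonneg (dentry (S.f p 𝔟₀) x i j)]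
    _ ≤ C₁ + |C₂| := add_le_add h1 h2
    _ ≤ |C₂| + C₁ + 1 := by linarith

lemma consF_agree {s : ℕ} {𝔞 𝔟 : ℕ → A} (h : ∀ i < s, 𝔞 i = 𝔟 i) (a : A) :
    ∀ i < s + 1, consF a 𝔞 i = consF a 𝔟 i := by
  intro i hi
  cases i with
  | zero => rfl
  | succ k => exact h k (by omega)

lemma app_agree : ∀ (w : List A) {s : ℕ} {𝔞 𝔟 : ℕ → A}, (∀ i < s, 𝔞 i = 𝔟 i) →
    ∀ n < w.length + s, app w 𝔞 n = app w 𝔟 n := by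
  intro w
  induction w with
  | nil => intro s 𝔞 𝔟 h n hn; exact h n (by simpa using hn)
  | cons a w ih =>
    intro s 𝔞 𝔟 h n hn
    show app w (consF a 𝔞) n = app w (consF a 𝔟) n
    exact ih (consF_agree h a) n (by simp at hn ⊢; omega)

lemma psi_concat (p : E d) :
    ∀ (w : List A) (c : A) (𝔞 : ℕ → A),
      psi S.f p (w ++ [c]) 𝔞 = psi S.f p w 𝔞 ∘ S.f p (consF c (app w 𝔞)) := by
  intro w
  induction w with
  | nil =>
    intro c 𝔞
    show S.f p (consF c 𝔞) ∘ id = id ∘ S.f p (consF c (app [] 𝔞))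
    rw [Function.comp_id, Function.id_comp]
    rfl
  | cons a w ih =>
    intro c 𝔞
    show S.f p (consF a 𝔞) ∘ psi S.f p (w ++ [c]) (consF a 𝔞) = _
    rw [ih c (consF a 𝔞)]
    rfl


section RowSum

variable (hN : 0 < N) (hr : 2 ≤ r) (hU : UnipOn hN S.f S.P' S.X')
variable {γ' γ : ℝ} (hγ : GammaBounds hN S.f γ' γ)
variable {R t γ₂ : ℝ} (hR1 : 1 ≤ R)
  (hRb : ∀ p ∈ closure (cubeO d), ∀ (𝔟 : ℕ → A), ∀ x ∈ cube N, ∀ i j : Fin N,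
      |dentry (S.f p 𝔟) x i j| ≤ R)
  (ht1 : 1 ≤ t) (hγ₂γ : γ < γ₂) (hγ₂1 : γ₂ < 1) (htR : γ + N * R / t ≤ γ₂)

include hN hr hU hγ hR1 hRb ht1 hγ₂γ hγ₂1 htR in
lemma rowsum {p : E d} (hp : p ∈ closure (cubeO d)) :
    ∀ (w : List A) (𝔞 : ℕ → A) {x : E N}, x ∈ cube N → ∀ i : Fin N,
      ∑ j, |dentry (psi S.f p w 𝔞) x i j| * t ^ (j : ℕ) ≤ γ₂ ^ w.length * t ^ (i : ℕ) := by
  have ht0 : (0:ℝ) < t := lt_of_lt_of_le one_pos ht1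
  have hγ0 : (0:ℝ) < γ := lt_trans hγ.1 hγ.2.1
  have hγ₂0 : (0:ℝ) < γ₂ := lt_trans hγ0 hγ₂γ
  intro w
  induction w with
  | nil =>
    intro 𝔞 x _ i
    have : ∀ j : Fin N, |dentry (id : E N → E N) x i j| * t ^ (j:ℕ)
        = if j = i then t ^ (i:ℕ) else 0 := by
      intro j
      rw [dentry_id]
      by_cases h : i = j
      · subst h; simp
      · rw [if_neg h, if_neg (fun hh => h hh.symm)]; simp
    calc ∑ j, |dentry (psi S.f p [] 𝔞) x i j| * t ^ (j:ℕ)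
        = ∑ j, if j = i then t ^ (i:ℕ) else 0 := Finset.sum_congr rfl (fun j _ => this j)
      _ = t ^ (i:ℕ) := by rw [Finset.sum_ite_eq' Finset.univ i (fun _ => t ^ (i:ℕ))]; simp
      _ ≤ γ₂ ^ (List.length ([] : List A)) * t ^ (i:ℕ) := by simp
  | cons a w ih =>
    intro 𝔞 x hx i
    have hp' := S.P_subset hp
    set y := psi S.f p w (consF a 𝔞) x with hy
    have hymem : y ∈ cube N := psi_mem_cube S hp' w (consF a 𝔞) hx
    have hdc : ∀ i' j : Fin N, dentry (psi S.f p (a :: w) 𝔞) x i' j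
        = ∑ l, dentry (S.f p (consF a 𝔞)) y i' l * dentry (psi S.f p w (consF a 𝔞)) x l j := by
      intro i' j
      exact dentry_comp _ _ x (slice_differentiableAt S hr _ hp' (S.X_subset hymem))
        (psi_differentiableAt S hr hp' w _ hx) i' j
    have habs : ∀ j : Fin N, |dentry (psi S.f p (a :: w) 𝔞) x i j|
        ≤ ∑ l, |dentry (S.f p (consF a 𝔞)) y i l| * |dentry (psi S.f p w (consF a 𝔞)) x l j| := by
      intro j
      rw [hdc i j]
      refine (Finset.abs_sum_le_sum_abs _ _).trans ?_
      apply Finset.sum_le_sum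
      intro l _
      rw [abs_mul]
    calc ∑ j, |dentry (psi S.f p (a :: w) 𝔞) x i j| * t ^ (j:ℕ)
        ≤ ∑ j, (∑ l, |dentry (S.f p (consF a 𝔞)) y i l|
            * |dentry (psi S.f p w (consF a 𝔞)) x l j|) * t ^ (j:ℕ) := by
          apply Finset.sum_le_sum
          intro j _
          exact mul_le_mul_of_nonneg_right (habs j) (pow_nonneg ht0.le _)
      _ = ∑ l, |dentry (S.f p (consF a 𝔞)) y i l|
            * (∑ j, |dentry (psi S.f p w (consF a 𝔞)) x l j| * t ^ (j:ℕ)) := by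
          simp only [Finset.sum_mul, Finset.mul_sum]
          rw [Finset.sum_comm]
          apply Finset.sum_congr rfl
          intro l _
          apply Finset.sum_congr rfl
          intro j _
          ring
      _ ≤ ∑ l, |dentry (S.f p (consF a 𝔞)) y i l| * (γ₂ ^ w.length * t ^ (l:ℕ)) := by
          apply Finset.sum_le_sum
          intro l _
          exact mul_le_mul_of_nonneg_left (ih _ hx l) (abs_nonneg _)
      _ = γ₂ ^ w.length * ∑ l, |dentry (S.f p (consF a 𝔞)) y i l| * t ^ (l:ℕ) := by
          rw [Finset.mul_sum]
          apply Finset.sum_congr rfl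
          intro l _
          ring
      _ ≤ γ₂ ^ w.length * (γ₂ * t ^ (i:ℕ)) := by
          apply mul_le_mul_of_nonneg_left ?_ (pow_nonneg hγ₂0.le _)
          -- inner row bound for a single step
          have hsplit := Finset.add_sum_erase Finset.univ
            (fun l : Fin N => |dentry (S.f p (consF a 𝔞)) y i l| * t ^ (l:ℕ))
            (Finset.mem_univ i)
          rw [← hsplit]
          have hdiag : |dentry (S.f p (consF a 𝔞)) y i i| * t ^ (i:ℕ) ≤ γ * t ^ (i:ℕ) :=
            mul_le_mul_of_nonneg_right
              (dentry_diag_lt S hN hU hγ hp (consF a 𝔞) hymem i).le (pow_nonneg ht0.le _)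
          have hoff : ∀ l ∈ Finset.univ.erase i,
              |dentry (S.f p (consF a 𝔞)) y i l| * t ^ (l:ℕ) ≤ R / t * t ^ (i:ℕ) := by
            intro l hl
            have hne : l ≠ i := Finset.ne_of_mem_erase hl
            rcases lt_or_gt_of_ne (fun h => hne (Fin.ext h) : (l:ℕ) ≠ (i:ℕ)) with hlt | hgt
            · -- l < i : entry ≤ R, t^l ≤ t^(i-1) = t^i/t
              have h1 : |dentry (S.f p (consF a 𝔞)) y i l| ≤ R :=
                hRb p hp (consF a 𝔞) y hymem i l
              have h2 : t ^ (l:ℕ) * t ≤ t ^ (i:ℕ) := by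
                calc t ^ (l:ℕ) * t = t ^ ((l:ℕ)+1) := by ring
                _ ≤ t ^ (i:ℕ) := pow_le_pow_right₀ ht1 (by omega)
              have h3 : t ^ (l:ℕ) ≤ t ^ (i:ℕ) / t := by
                rw [le_div_iff₀ ht0]; exact h2
              calc |dentry (S.f p (consF a 𝔞)) y i l| * t ^ (l:ℕ)
                  ≤ R * (t ^ (i:ℕ) / t) :=
                    mul_le_mul h1 h3 (pow_nonneg ht0.le _) (by linarith)
                _ = R / t * t ^ (i:ℕ) := by ring
            · -- i < l : entry is 0
              have h0 := (hU p hp' (consF a 𝔞) y (S.X_subset hymem)).1 i l hgt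
              rw [h0]
              simp only [abs_zero, zero_mul]
              positivity
          have hsum : ∑ l ∈ Finset.univ.erase i,
              |dentry (S.f p (consF a 𝔞)) y i l| * t ^ (l:ℕ) ≤ N * (R / t * t ^ (i:ℕ)) := by
            refine (Finset.sum_le_card_nsmul _ _ _ hoff).trans ?_
            rw [nsmul_eq_mul]
            apply mul_le_mul_of_nonneg_right
            · exact_mod_cast (Finset.card_erase_of_mem (Finset.mem_univ i)).le.trans
                (by simp : (Finset.univ : Finset (Fin N)).card - 1 ≤ N)
            · positivity
          calc |dentry (S.f p (consF a 𝔞)) y i i| * t ^ (i:ℕ)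
                + ∑ l ∈ Finset.univ.erase i, |dentry (S.f p (consF a 𝔞)) y i l| * t ^ (l:ℕ)
              ≤ γ * t ^ (i:ℕ) + N * (R / t * t ^ (i:ℕ)) := add_le_add hdiag hsum
            _ = (γ + N * R / t) * t ^ (i:ℕ) := by ring
            _ ≤ γ₂ * t ^ (i:ℕ) := mul_le_mul_of_nonneg_right htR (pow_nonneg ht0.le _)
      _ = γ₂ ^ (a :: w).length * t ^ (i:ℕ) := by
          rw [List.length_cons, pow_succ]
          ring

include hN hr hU hγ hR1 hRb ht1 hγ₂γ hγ₂1 htR in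
lemma psi_lip {p : E d} (hp : p ∈ closure (cubeO d)) (w : List A) (𝔞 : ℕ → A)
    {x y : E N} (hx : x ∈ cube N) (hy : y ∈ cube N) :
    ‖psi S.f p w 𝔞 y - psi S.f p w 𝔞 x‖
      ≤ (N * t ^ N * γ₂ ^ w.length) * ‖y - x‖ := by
  have ht0 : (0:ℝ) < t := lt_of_lt_of_le one_pos ht1
  have hγ0 : (0:ℝ) < γ := lt_trans hγ.1 hγ.2.1
  have hγ₂0 : (0:ℝ) < γ₂ := lt_trans hγ0 hγ₂γ
  have hp' := S.P_subset hp
  apply Convex.norm_image_sub_le_of_norm_fderiv_le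
    (fun z hz => psi_differentiableAt S hr hp' w 𝔞 hz) ?_ convex_cube hx hy
  intro z hz
  apply ContinuousLinearMap.opNorm_le_bound _ (by positivity)
  intro v
  set T := fderiv ℝ (psi S.f p w 𝔞) z
  have hTv : T v = ∑ j, v j • T (EuclideanSpace.single j (1:ℝ)) := by
    conv_lhs => rw [euclid_decomp v]
    rw [map_sum]
    apply Finset.sum_congr rfl
    intro j _
    rw [_root_.map_smul]
  calc ‖T v‖ = ‖∑ j, v j • T (EuclideanSpace.single j (1:ℝ))‖ := by rw [hTv]
    _ ≤ ∑ j, ‖v j • T (EuclideanSpace.single j (1:ℝ))‖ := norm_sum_le _ _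
    _ = ∑ j, |v j| * ‖T (EuclideanSpace.single j (1:ℝ))‖ := by
        apply Finset.sum_congr rfl
        intro j _
        rw [norm_smul]
        rfl
    _ ≤ ∑ j, ‖v‖ * (∑ i, |dentry (psi S.f p w 𝔞) z i j|) := by
        apply Finset.sum_le_sum
        intro j _
        apply mul_le_mul (coord_abs_le_norm v j) ?_ (norm_nonneg _) (norm_nonneg _)
        exact (norm_le_sum_abs _).trans (le_refl _)
    _ = ‖v‖ * ∑ j, ∑ i, |dentry (psi S.f p w 𝔞) z i j| := by rw [Finset.mul_sum]
    _ ≤ ‖v‖ * (N * t ^ N * γ₂ ^ w.length) := by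
        apply mul_le_mul_of_nonneg_left ?_ (norm_nonneg _)
        rw [Finset.sum_comm]
        calc ∑ i, ∑ j, |dentry (psi S.f p w 𝔞) z i j|
            ≤ ∑ i : Fin N, ∑ j, |dentry (psi S.f p w 𝔞) z i j| * t ^ (j:ℕ) := by
              apply Finset.sum_le_sum
              intro i _
              apply Finset.sum_le_sum
              intro j _
              nth_rewrite 1 [← mul_one (|dentry (psi S.f p w 𝔞) z i j|)]
              exact mul_le_mul_of_nonneg_left (one_le_pow₀ ht1) (abs_nonneg _)
          _ ≤ ∑ i : Fin N, γ₂ ^ w.length * t ^ (i:ℕ) := by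
              apply Finset.sum_le_sum
              intro i _
              exact rowsum S hN hr hU hγ hR1 hRb ht1 hγ₂γ hγ₂1 htR hp w 𝔞 hz i
          _ ≤ ∑ _i : Fin N, γ₂ ^ w.length * t ^ N := by
              apply Finset.sum_le_sum
              intro i _
              exact mul_le_mul_of_nonneg_left
                (pow_le_pow_right₀ ht1 (le_of_lt i.isLt)) (pow_nonneg hγ₂0.le _)
          _ = N * t ^ N * γ₂ ^ w.length := by
              rw [Finset.sum_const]
              simp [nsmul_eq_mul]
              ring
    _ = (N * t ^ N * γ₂ ^ w.length) * ‖v‖ := by ring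

include hN hr hU hγ hR1 hRb ht1 hγ₂γ hγ₂1 htR in
lemma orbit_diff {C₀ θ₀ : ℝ} (hC₀ : 0 < C₀) (hθ₀ : θ₀ ∈ Set.Ioo (0:ℝ) 1)
    (hHol : ∀ p ∈ S.P', ∀ (𝔞 𝔟 : ℕ → A) (qq : ℕ), (∀ i < qq, 𝔞 i = 𝔟 i) → ∀ x ∈ S.X',
      ‖S.f p 𝔞 x - S.f p 𝔟 x‖ ≤ C₀ * θ₀ ^ qq)
    {ξ δf : ℝ} (hξ0 : 0 ≤ ξ)
    (hf : ∀ p₁ ∈ closure (cubeO d), ∀ p₂ ∈ closure (cubeO d), ‖p₁ - p₂‖ ≤ δf →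
      ∀ (𝔟 : ℕ → A), ∀ x ∈ cube N, ‖S.f p₁ 𝔟 x - S.f p₂ 𝔟 x‖ ≤ ξ)
    {p₁ p₂ : E d} (hp₁ : p₁ ∈ closure (cubeO d)) (hp₂ : p₂ ∈ closure (cubeO d))
    (hd : ‖p₁ - p₂‖ ≤ δf) :
    ∀ (w : List A) (s : ℕ) (𝔞₁ 𝔞₂ : ℕ → A), (∀ i < s, 𝔞₁ i = 𝔞₂ i) → ∀ x ∈ cube N,
      ‖psi S.f p₁ w 𝔞₁ x - psi S.f p₂ w 𝔞₂ x‖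
        ≤ (∑ j ∈ Finset.range w.length, ((N:ℝ) * t ^ N) * γ₂ ^ j) * (ξ + C₀ * θ₀ ^ (s+1)) := by
  have ht0 : (0:ℝ) < t := lt_of_lt_of_le one_pos ht1
  have hγ0 : (0:ℝ) < γ := lt_trans hγ.1 hγ.2.1
  have hγ₂0 : (0:ℝ) < γ₂ := lt_trans hγ0 hγ₂γ
  have hterm0 : ∀ s' : ℕ, 0 ≤ ξ + C₀ * θ₀ ^ (s'+1) := by
    intro s'
    have := pow_pos hθ₀.1 (s'+1)
    positivity
  intro w
  induction w using List.reverseRecOn with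
  | nil =>
    intro s 𝔞₁ 𝔞₂ _ x _
    show ‖x - x‖ ≤ _
    simp
  | append_singleton w c ih =>
    intro s 𝔞₁ 𝔞₂ hag x hx
    have hp₁' := S.P_subset hp₁
    have hp₂' := S.P_subset hp₂
    rw [psi_concat S p₁ w c 𝔞₁, psi_concat S p₂ w c 𝔞₂]
    set x₁ := S.f p₁ (consF c (app w 𝔞₁)) x with hx₁
    set x₂ := S.f p₂ (consF c (app w 𝔞₂)) x with hx₂
    have hx₁m : x₁ ∈ cube N := S.into _ p₁ hp₁' ⟨x, S.X_subset hx, rfl⟩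
    have hx₂m : x₂ ∈ cube N := S.into _ p₂ hp₂' ⟨x, S.X_subset hx, rfl⟩
    have hstep : ‖x₁ - x₂‖ ≤ ξ + C₀ * θ₀ ^ (w.length + s + 1) := by
      have hagf : ∀ i < w.length + s + 1, consF c (app w 𝔞₁) i = consF c (app w 𝔞₂) i :=
        consF_agree (app_agree w hag) c
      have h1 : ‖S.f p₁ (consF c (app w 𝔞₁)) x - S.f p₁ (consF c (app w 𝔞₂)) x‖
          ≤ C₀ * θ₀ ^ (w.length + s + 1) :=
        hHol p₁ hp₁' _ _ _ hagf x (S.X_subset hx)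
      have h2 : ‖S.f p₁ (consF c (app w 𝔞₂)) x - S.f p₂ (consF c (app w 𝔞₂)) x‖ ≤ ξ :=
        hf p₁ hp₁ p₂ hp₂ hd _ x hx
      calc ‖x₁ - x₂‖ ≤ ‖S.f p₁ (consF c (app w 𝔞₁)) x - S.f p₁ (consF c (app w 𝔞₂)) x‖
            + ‖S.f p₁ (consF c (app w 𝔞₂)) x - S.f p₂ (consF c (app w 𝔞₂)) x‖ := by
            rw [hx₁, hx₂]
            exact norm_sub_le_norm_sub_add_norm_sub _ _ _
        _ ≤ ξ + C₀ * θ₀ ^ (w.length + s + 1) := by linarith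
    have hstep' : ‖x₁ - x₂‖ ≤ ξ + C₀ * θ₀ ^ (s + 1) := by
      refine hstep.trans (add_le_add_right (mul_le_mul_of_nonneg_left ?_ hC₀.le) ξ)
      exact pow_le_pow_of_le_one hθ₀.1.le hθ₀.2.le (by omega)
    have hLip : ‖psi S.f p₁ w 𝔞₁ x₁ - psi S.f p₁ w 𝔞₁ x₂‖
        ≤ ((N:ℝ) * t ^ N * γ₂ ^ w.length) * ‖x₁ - x₂‖ := by
      exact psi_lip S hN hr hU hγ hR1 hRb ht1 hγ₂γ hγ₂1 htR hp₁ w 𝔞₁ hx₂m hx₁m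
    have hIH := ih s 𝔞₁ 𝔞₂ hag x₂ hx₂m
    calc ‖(psi S.f p₁ w 𝔞₁ ∘ S.f p₁ (consF c (app w 𝔞₁))) x
          - (psi S.f p₂ w 𝔞₂ ∘ S.f p₂ (consF c (app w 𝔞₂))) x‖
        = ‖psi S.f p₁ w 𝔞₁ x₁ - psi S.f p₂ w 𝔞₂ x₂‖ := rfl
      _ ≤ ‖psi S.f p₁ w 𝔞₁ x₁ - psi S.f p₁ w 𝔞₁ x₂‖
          + ‖psi S.f p₁ w 𝔞₁ x₂ - psi S.f p₂ w 𝔞₂ x₂‖ :=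
          norm_sub_le_norm_sub_add_norm_sub _ _ _
      _ ≤ ((N:ℝ) * t ^ N * γ₂ ^ w.length) * (ξ + C₀ * θ₀ ^ (s+1))
          + (∑ j ∈ Finset.range w.length, ((N:ℝ) * t ^ N) * γ₂ ^ j) * (ξ + C₀ * θ₀ ^ (s+1)) := by
          apply add_le_add ?_ hIH
          refine hLip.trans ?_
          exact mul_le_mul_of_nonneg_left hstep' (by positivity)
      _ = (∑ j ∈ Finset.range (w ++ [c]).length, ((N:ℝ) * t ^ N) * γ₂ ^ j)
            * (ξ + C₀ * θ₀ ^ (s+1)) := by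
          rw [List.length_append, List.length_cons, List.length_nil]
          rw [Finset.sum_range_succ]
          ring

end RowSum

/-- extension of a finite word by a constant letter -/
def extWord (a₀ : A) (q : ℕ) (u : Fin q → A) : ℕ → A :=
  fun n => if h : n < q then u ⟨n, h⟩ else a₀

lemma extWord_agree (a₀ : A) (q : ℕ) (𝔟 : ℕ → A) :
    ∀ i < q, 𝔟 i = extWord a₀ q (fun k : Fin q => 𝔟 k) i := by
  intro i hi
  simp [extWord, hi]

section Approx

variable [Fintype A] (hr : 2 ≤ r) (a₀ : A)

include hr a₀ in
lemma f_close : ∀ ξ > (0:ℝ), ∃ δ > (0:ℝ), ∀ p₁ ∈ closure (cubeO d), ∀ p₂ ∈ closure (cubeO d),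
    ‖p₁ - p₂‖ ≤ δ → ∀ (𝔟 : ℕ → A), ∀ x ∈ cube N, ‖S.f p₁ 𝔟 x - S.f p₂ 𝔟 x‖ ≤ ξ := by
  intro ξ hξ
  obtain ⟨C₀, hC₀, θ₀, hθ₀, hH⟩ := S.holder0
  obtain ⟨q, hq⟩ := exists_pow_lt_of_lt_one (show (0:ℝ) < ξ / (4 * C₀) by positivity) hθ₀.2
  have hqb : C₀ * θ₀ ^ q ≤ ξ / 4 := by
    rw [lt_div_iff₀ (show (0:ℝ) < 4 * C₀ by positivity)] at hq
    nlinarith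
  have hKd : IsCompact (closure (cubeO d)) :=
    isCompact_cube.of_isClosed_subset isClosed_closure closure_cubeO_subset
  have hK : IsCompact ((closure (cubeO d)) ×ˢ cube N) := hKd.prod isCompact_cube
  have hsub : (closure (cubeO d)) ×ˢ cube N ⊆ S.P' ×ˢ S.X' :=
    Set.prod_mono S.P_subset S.X_subset
  have hAll : ∀ u : Fin q → A, ∃ δ > (0:ℝ), ∀ z ∈ (closure (cubeO d)) ×ˢ cube N,
      ∀ z' ∈ (closure (cubeO d)) ×ˢ cube N, dist z z' < δ →
      dist (S.f z.1 (extWord a₀ q u) z.2) (S.f z'.1 (extWord a₀ q u) z'.2) < ξ / 4 := by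
    intro u
    have hcont : ContinuousOn (fun z : E d × E N => S.f z.1 (extWord a₀ q u) z.2)
        ((closure (cubeO d)) ×ˢ cube N) := (f_value_continuousOn S _).mono hsub
    have := Metric.uniformContinuousOn_iff.mp
      (hK.uniformContinuousOn_of_continuous hcont) (ξ/4) (by positivity)
    obtain ⟨δ, hδ, hδ'⟩ := this
    exact ⟨δ, hδ, fun z hz z' hz' hd => hδ' z hz z' hz' hd⟩
  choose δu hδu hP using hAll
  have hne : Nonempty (Fin q → A) := ⟨fun _ => a₀⟩
  set δfin := Finset.univ.inf' Finset.univ_nonempty δu with hδfin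
  have hδfin0 : 0 < δfin := by
    rw [hδfin, Finset.lt_inf'_iff]
    intro u _
    exact hδu u
  refine ⟨δfin / 2, by positivity, ?_⟩
  intro p₁ hp₁ p₂ hp₂ hd 𝔟 x hx
  set u : Fin q → A := fun k => 𝔟 k with hu
  set rep := extWord a₀ q u with hrep
  have hagree : ∀ i < q, 𝔟 i = rep i := extWord_agree a₀ q 𝔟
  have h1 : ‖S.f p₁ 𝔟 x - S.f p₁ rep x‖ ≤ ξ / 4 :=
    (hH p₁ (S.P_subset hp₁) 𝔟 rep q hagree x (S.X_subset hx)).trans hqb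
  have h3 : ‖S.f p₂ rep x - S.f p₂ 𝔟 x‖ ≤ ξ / 4 := by
    rw [norm_sub_rev]
    exact (hH p₂ (S.P_subset hp₂) 𝔟 rep q hagree x (S.X_subset hx)).trans hqb
  have h2 : ‖S.f p₁ rep x - S.f p₂ rep x‖ ≤ ξ / 4 := by
    have hdist : dist ((p₁, x) : E d × E N) ((p₂, x) : E d × E N) < δu u := by
      rw [Prod.dist_eq, max_lt_iff]
      have h1 : dist p₁ p₂ ≤ δfin / 2 := by rwa [dist_eq_norm]
      have hle : δfin ≤ δu u := Finset.inf'_le _ (Finset.mem_univ u)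
      constructor
      · linarith
      · rw [dist_self]; linarith
    have := hP u (p₁, x) ⟨hp₁, hx⟩ (p₂, x) ⟨hp₂, hx⟩ hdist
    rw [dist_eq_norm] at this
    exact this.le
  calc ‖S.f p₁ 𝔟 x - S.f p₂ 𝔟 x‖
      ≤ ‖S.f p₁ 𝔟 x - S.f p₁ rep x‖ + ‖S.f p₁ rep x - S.f p₂ rep x‖
        + ‖S.f p₂ rep x - S.f p₂ 𝔟 x‖ := by
        have := norm_sub_le_norm_sub_add_norm_sub (S.f p₁ 𝔟 x) (S.f p₁ rep x) (S.f p₂ 𝔟 x)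
        have h' := norm_sub_le_norm_sub_add_norm_sub (S.f p₁ rep x) (S.f p₂ rep x) (S.f p₂ 𝔟 x)
        linarith
    _ ≤ ξ / 4 + ξ / 4 + ξ / 4 := by linarith
    _ ≤ ξ := by linarith

include hr a₀ in
lemma Phi_mod (hN : 0 < N) : ∀ η > (0:ℝ), ∃ q : ℕ, ∃ δ > (0:ℝ),
    ∀ p₁ ∈ closure (cubeO d), ∀ p₂ ∈ closure (cubeO d), ‖p₁ - p₂‖ ≤ δ →
    ∀ (𝔟₁ 𝔟₂ : ℕ → A), (∀ i < q, 𝔟₁ i = 𝔟₂ i) →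
    ∀ y ∈ cube N, ∀ z ∈ cube N, ‖y - z‖ ≤ δ →
    |dentry (S.f p₁ 𝔟₁) y ⟨0, hN⟩ ⟨0, hN⟩ - dentry (S.f p₂ 𝔟₂) z ⟨0, hN⟩ ⟨0, hN⟩| ≤ η := by
  intro η hη
  obtain ⟨C₁, hC₁, θ₁, hθ₁, hH⟩ := S.holder1
  obtain ⟨q, hq⟩ := exists_pow_lt_of_lt_one (show (0:ℝ) < η / (4 * C₁) by positivity) hθ₁.2
  have hqb : C₁ * θ₁ ^ q ≤ η / 4 := by
    rw [lt_div_iff₀ (show (0:ℝ) < 4 * C₁ by positivity)] at hq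
    nlinarith
  have hKd : IsCompact (closure (cubeO d)) :=
    isCompact_cube.of_isClosed_subset isClosed_closure closure_cubeO_subset
  have hK : IsCompact ((closure (cubeO d)) ×ˢ cube N) := hKd.prod isCompact_cube
  have hsub : (closure (cubeO d)) ×ˢ cube N ⊆ S.P' ×ˢ S.X' :=
    Set.prod_mono S.P_subset S.X_subset
  have hAll : ∀ u : Fin q → A, ∃ δ > (0:ℝ), ∀ z ∈ (closure (cubeO d)) ×ˢ cube N,
      ∀ z' ∈ (closure (cubeO d)) ×ˢ cube N, dist z z' < δ →
      dist (dentry (S.f z.1 (extWord a₀ q u)) z.2 ⟨0, hN⟩ ⟨0, hN⟩)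
        (dentry (S.f z'.1 (extWord a₀ q u)) z'.2 ⟨0, hN⟩ ⟨0, hN⟩) < η / 4 := by
    intro u
    have hcont : ContinuousOn
        (fun z : E d × E N => dentry (S.f z.1 (extWord a₀ q u)) z.2 ⟨0, hN⟩ ⟨0, hN⟩)
        ((closure (cubeO d)) ×ˢ cube N) :=
      (dentry_slice_continuousOn S hr (extWord a₀ q u) ⟨0, hN⟩ ⟨0, hN⟩).mono hsub
    have := Metric.uniformContinuousOn_iff.mp
      (hK.uniformContinuousOn_of_continuous hcont) (η/4) (by positivity)
    obtain ⟨δ, hδ, hδ'⟩ := this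
    exact ⟨δ, hδ, fun z hz z' hz' hd => hδ' z hz z' hz' hd⟩
  choose δu hδu hP using hAll
  have hne : Nonempty (Fin q → A) := ⟨fun _ => a₀⟩
  set δfin := Finset.univ.inf' Finset.univ_nonempty δu with hδfin
  have hδfin0 : 0 < δfin := by
    rw [hδfin, Finset.lt_inf'_iff]
    intro u _
    exact hδu u
  refine ⟨q, δfin / 2, by positivity, ?_⟩
  intro p₁ hp₁ p₂ hp₂ hd 𝔟₁ 𝔟₂ hagree y hy z hz hyz
  set u : Fin q → A := fun k => 𝔟₁ k with hu
  set rep := extWord a₀ q u with hrep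
  have hag1 : ∀ i < q, 𝔟₁ i = rep i := extWord_agree a₀ q 𝔟₁
  have hag2 : ∀ i < q, 𝔟₂ i = rep i := by
    intro i hi
    rw [← hagree i hi]
    exact hag1 i hi
  have h1 : |dentry (S.f p₁ 𝔟₁) y ⟨0, hN⟩ ⟨0, hN⟩ - dentry (S.f p₁ rep) y ⟨0, hN⟩ ⟨0, hN⟩|
      ≤ η / 4 :=
    ((dentry_sub_le _ _ _ _ _).trans
      (hH p₁ (S.P_subset hp₁) 𝔟₁ rep q hag1 y (S.X_subset hy))).trans hqb
  have h3 : |dentry (S.f p₂ rep) z ⟨0, hN⟩ ⟨0, hN⟩ - dentry (S.f p₂ 𝔟₂) z ⟨0, hN⟩ ⟨0, hN⟩|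
      ≤ η / 4 := by
    rw [abs_sub_comm]
    exact ((dentry_sub_le _ _ _ _ _).trans
      (hH p₂ (S.P_subset hp₂) 𝔟₂ rep q hag2 z (S.X_subset hz))).trans hqb
  have h2 : |dentry (S.f p₁ rep) y ⟨0, hN⟩ ⟨0, hN⟩ - dentry (S.f p₂ rep) z ⟨0, hN⟩ ⟨0, hN⟩|
      ≤ η / 4 := by
    have hdist : dist ((p₁, y) : E d × E N) ((p₂, z) : E d × E N) < δu u := by
      rw [Prod.dist_eq]
      have hle : δfin ≤ δu u := Finset.inf'_le _ (Finset.mem_univ u)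
      rw [max_lt_iff]
      rw [dist_eq_norm, dist_eq_norm]
      constructor <;> linarith
    have := hP u (p₁, y) ⟨hp₁, hy⟩ (p₂, z) ⟨hp₂, hz⟩ hdist
    rw [Real.dist_eq] at this
    exact this.le
  calc |dentry (S.f p₁ 𝔟₁) y ⟨0, hN⟩ ⟨0, hN⟩ - dentry (S.f p₂ 𝔟₂) z ⟨0, hN⟩ ⟨0, hN⟩|
      ≤ |dentry (S.f p₁ 𝔟₁) y ⟨0, hN⟩ ⟨0, hN⟩ - dentry (S.f p₁ rep) y ⟨0, hN⟩ ⟨0, hN⟩|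
        + |dentry (S.f p₁ rep) y ⟨0, hN⟩ ⟨0, hN⟩ - dentry (S.f p₂ rep) z ⟨0, hN⟩ ⟨0, hN⟩|
        + |dentry (S.f p₂ rep) z ⟨0, hN⟩ ⟨0, hN⟩ - dentry (S.f p₂ 𝔟₂) z ⟨0, hN⟩ ⟨0, hN⟩| := by
        have h := abs_sub_le (dentry (S.f p₁ 𝔟₁) y ⟨0, hN⟩ ⟨0, hN⟩)
          (dentry (S.f p₁ rep) y ⟨0, hN⟩ ⟨0, hN⟩) (dentry (S.f p₂ 𝔟₂) z ⟨0, hN⟩ ⟨0, hN⟩)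
        have h' := abs_sub_le (dentry (S.f p₁ rep) y ⟨0, hN⟩ ⟨0, hN⟩)
          (dentry (S.f p₂ rep) z ⟨0, hN⟩ ⟨0, hN⟩) (dentry (S.f p₂ 𝔟₂) z ⟨0, hN⟩ ⟨0, hN⟩)
        linarith
    _ ≤ η / 4 + η / 4 + η / 4 := by linarith
    _ ≤ η := by linarith

end Approx

end Psi
end AuxPsi

/-- Lemma: comparison of contraction rates at nearby parameters and arbitrary fibers. -/
theorem lemma_lemauxlilou {A : Type} [Fintype A] {N d : ℕ} {r : ℕ∞}
    (hA : 2 ≤ Fintype.card A) (hN : 0 < N) (hd : 0 < d) (hr : 2 ≤ r)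
    (S : SkewFamily A N d r)
    (hU : UnipOn hN S.f S.P' S.X')
    (γ' γ : ℝ) (hγ : GammaBounds hN S.f γ' γ) :
    ∀ ε > (0:ℝ), ∃ δ > (0:ℝ), ∃ D₅ > (0:ℝ),
      ∀ p₁ ∈ closure (cubeO d), ∀ p₂ ∈ closure (cubeO d), ‖p₁ - p₂‖ < δ →
      ∀ (𝔞₁ 𝔞₂ : ℕ → A) (w : List A),
        Lam hN S.f p₁ 𝔞₁ w ^ (1 + ε / (2 * N)) ≤ D₅ * Lam hN S.f p₂ 𝔞₂ w := by
  intro ε hε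
  have hγ'0 : (0:ℝ) < γ' := hγ.1
  have hγ'γ : γ' < γ := hγ.2.1
  have hγ1 : γ < 1 := hγ.2.2.1
  have hγ0 : (0:ℝ) < γ := lt_trans hγ'0 hγ'γ
  have hNe : Nonempty A := Fintype.card_pos_iff.mp (by omega)
  obtain ⟨a₀⟩ := hNe
  have hN' : (0:ℝ) < (N:ℝ) := by exact_mod_cast hN
  set κ := ε / (2 * (N:ℝ)) with hκdef
  have hκ0 : 0 < κ := by positivity
  set Gh := γ ^ (-(κ/2)) with hGhdef
  have hGh0 : 0 < Gh := Real.rpow_pos_of_pos hγ0 _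
  have hGh1 : 1 < Gh := by
    rw [hGhdef, Real.one_lt_rpow_iff_of_pos hγ0]
    right
    exact ⟨hγ1, by simp; positivity⟩
  set η := γ' * (Gh - 1) with hηdef
  have hη0 : 0 < η := by nlinarith
  obtain ⟨q₀, δM, hδM0, hmod⟩ := Phi_mod S hr a₀ hN η hη0
  obtain ⟨R, hR1, hRb⟩ := R_exists S hr (fun _ => a₀)
  set γ₂ := (1 + γ)/2 with hγ₂def
  have hγ₂γ : γ < γ₂ := by rw [hγ₂def]; linarith
  have hγ₂1 : γ₂ < 1 := by rw [hγ₂def]; linarith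
  have hγ₂0 : 0 < γ₂ := lt_trans hγ0 hγ₂γ
  set t := max 1 ((N:ℝ) * R / (γ₂ - γ)) with htdef
  have ht1 : 1 ≤ t := le_max_left _ _
  have ht0 : (0:ℝ) < t := lt_of_lt_of_le one_pos ht1
  have htR : γ + (N:ℝ) * R / t ≤ γ₂ := by
    have h1 : (N:ℝ) * R / (γ₂ - γ) ≤ t := le_max_right _ _
    have hga : (0:ℝ) < γ₂ - γ := by linarith
    have h2 : (N:ℝ) * R / t ≤ γ₂ - γ := by
      rw [div_le_iff₀ ht0]
      calc (N:ℝ) * R = (γ₂ - γ) * ((N:ℝ) * R / (γ₂ - γ)) := by field_simp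
        _ ≤ (γ₂ - γ) * t := mul_le_mul_of_nonneg_left h1 hga.le
    linarith
  set Slip := (N:ℝ) * t ^ N / (1 - γ₂) with hSlipdef
  have hSlip0 : 0 < Slip := by
    rw [hSlipdef]
    apply div_pos (by positivity) (by linarith)
  obtain ⟨C₀, hC₀, θ₀, hθ₀, hHol0⟩ := S.holder0
  obtain ⟨q₂, hq₂⟩ := exists_pow_lt_of_lt_one
    (show (0:ℝ) < δM / (2 * (Slip * C₀ + 1)) by positivity) hθ₀.2
  have hq₂b : Slip * C₀ * θ₀ ^ q₂ ≤ δM / 2 := by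
    rw [lt_div_iff₀ (show (0:ℝ) < 2 * (Slip * C₀ + 1) by positivity)] at hq₂
    nlinarith [pow_pos hθ₀.1 q₂]
  set q := max q₀ q₂ with hqdef
  set ξ := δM / (2 * Slip) with hξdef
  have hξ0 : 0 < ξ := by positivity
  obtain ⟨δf, hδf0, hfc⟩ := f_close S hr a₀ ξ hξ0
  have hrr1 : (1:ℝ) ≤ γ / γ' := by
    rw [le_div_iff₀ hγ'0]
    linarith
  have hrr0 : (0:ℝ) < γ / γ' := by positivity
  refine ⟨min δf δM, lt_min hδf0 hδM0, (γ/γ')^q, by positivity, ?_⟩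
  intro p₁ hp₁ p₂ hp₂ hdist 𝔞₁ 𝔞₂ w
  have hdf : ‖p₁ - p₂‖ ≤ δf := le_trans hdist.le (min_le_left _ _)
  have hdM : ‖p₁ - p₂‖ ≤ δM := le_trans hdist.le (min_le_right _ _)
  -- orbit bound
  have horb : ∀ (w' : List A) (s : ℕ) (𝔟₁ 𝔟₂ : ℕ → A), (∀ i < s, 𝔟₁ i = 𝔟₂ i) →
      ∀ x ∈ cube N, ‖psi S.f p₁ w' 𝔟₁ x - psi S.f p₂ w' 𝔟₂ x‖
        ≤ Slip * (ξ + C₀ * θ₀ ^ (s+1)) := by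
    intro w' s 𝔟₁ 𝔟₂ hagr x hx
    have hterm : (0:ℝ) ≤ ξ + C₀ * θ₀ ^ (s+1) := by
      have := pow_pos hθ₀.1 (s+1)
      positivity
    refine (orbit_diff S hN hr hU hγ hR1 hRb ht1 hγ₂γ hγ₂1 htR hC₀ hθ₀ hHol0 hξ0.le hfc
      hp₁ hp₂ hdf w' s 𝔟₁ 𝔟₂ hagr x hx).trans ?_
    apply mul_le_mul_of_nonneg_right ?_ hterm
    rw [← Finset.mul_sum]
    calc (N:ℝ) * t ^ N * ∑ j ∈ Finset.range w'.length, γ₂ ^ j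
        ≤ (N:ℝ) * t ^ N * (1 / (1 - γ₂)) := by
          apply mul_le_mul_of_nonneg_left (geom_partial_le hγ₂0.le hγ₂1 _) (by positivity)
      _ = Slip := by rw [hSlipdef]; ring
  -- master comparison
  have master : ∀ (w' : List A) (s : ℕ) (𝔟₁ 𝔟₂ : ℕ → A), (∀ i < s, 𝔟₁ i = 𝔟₂ i) →
      ∀ x ∈ cube N,
      lam hN S.f p₁ 𝔟₁ w' x
        ≤ Gh ^ w'.length * (γ/γ') ^ (q - s) * lam hN S.f p₂ 𝔟₂ w' x := by
    intro w'
    induction w' with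
    | nil =>
      intro s 𝔟₁ 𝔟₂ _ x _
      rw [lam_nil, lam_nil]
      simp only [List.length_nil, pow_zero, one_mul, mul_one]
      exact one_le_pow₀ hrr1
    | cons a w' ih =>
      intro s 𝔟₁ 𝔟₂ hagr x hx
      have hy₁m : psi S.f p₁ w' (consF a 𝔟₁) x ∈ cube N :=
        psi_mem_cube S (S.P_subset hp₁) w' _ hx
      have hy₂m : psi S.f p₂ w' (consF a 𝔟₂) x ∈ cube N :=
        psi_mem_cube S (S.P_subset hp₂) w' _ hx
      have hagr' : ∀ i < s+1, consF a 𝔟₁ i = consF a 𝔟₂ i := consF_agree hagr a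
      rw [lam_cons S hN hr hU hp₁ a w' 𝔟₁ hx, lam_cons S hN hr hU hp₂ a w' 𝔟₂ hx]
      set Φ₁ := |dentry (S.f p₁ (consF a 𝔟₁)) (psi S.f p₁ w' (consF a 𝔟₁) x) ⟨0,hN⟩ ⟨0,hN⟩|
        with hΦ₁def
      set Φ₂ := |dentry (S.f p₂ (consF a 𝔟₂)) (psi S.f p₂ w' (consF a 𝔟₂) x) ⟨0,hN⟩ ⟨0,hN⟩|
        with hΦ₂def
      have hb₁ := Phi_bounds S hN hγ hp₁ (consF a 𝔟₁) hy₁m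
      have hb₂ := Phi_bounds S hN hγ hp₂ (consF a 𝔟₂) hy₂m
      have hIH := ih (s+1) (consF a 𝔟₁) (consF a 𝔟₂) hagr' x hx
      have hlam₁0 : 0 ≤ lam hN S.f p₁ (consF a 𝔟₁) w' x := abs_nonneg _
      have hlam₂0 : 0 ≤ lam hN S.f p₂ (consF a 𝔟₂) w' x := abs_nonneg _
      have hRHS0 : 0 ≤ Gh ^ w'.length * (γ/γ') ^ (q - (s+1))
          * lam hN S.f p₂ (consF a 𝔟₂) w' x := by
        apply mul_nonneg (mul_nonneg (pow_nonneg hGh0.le _) (pow_nonneg hrr0.le _)) hlam₂0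
      by_cases hgood : q ≤ s + 1
      · -- good letter
        have hclose : ‖psi S.f p₁ w' (consF a 𝔟₁) x - psi S.f p₂ w' (consF a 𝔟₂) x‖ ≤ δM := by
          have h0 := horb w' (s+1) (consF a 𝔟₁) (consF a 𝔟₂) hagr' x hx
          have hθp : Slip * (C₀ * θ₀ ^ (s+1+1)) ≤ δM / 2 := by
            have h1 : θ₀ ^ (s+1+1) ≤ θ₀ ^ q₂ := by
              apply pow_le_pow_of_le_one hθ₀.1.le hθ₀.2.le
              have : q₂ ≤ q := le_max_right _ _
              omega
            calc Slip * (C₀ * θ₀ ^ (s+1+1)) ≤ Slip * (C₀ * θ₀ ^ q₂) := by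
                  apply mul_le_mul_of_nonneg_left
                    (mul_le_mul_of_nonneg_left h1 hC₀.le) hSlip0.le
              _ = Slip * C₀ * θ₀ ^ q₂ := by ring
              _ ≤ δM / 2 := hq₂b
          have hξp : Slip * ξ = δM / 2 := by
            rw [hξdef]
            field_simp
          calc ‖psi S.f p₁ w' (consF a 𝔟₁) x - psi S.f p₂ w' (consF a 𝔟₂) x‖
              ≤ Slip * (ξ + C₀ * θ₀ ^ (s+1+1)) := h0
            _ = Slip * ξ + Slip * (C₀ * θ₀ ^ (s+1+1)) := by ring
            _ ≤ δM / 2 + δM / 2 := by linarith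
            _ = δM := by ring
        have hagq : ∀ i < q₀, consF a 𝔟₁ i = consF a 𝔟₂ i := by
          intro i hi
          apply hagr' i
          have : q₀ ≤ q := le_max_left _ _
          omega
        have hmd := hmod p₁ hp₁ p₂ hp₂ hdM (consF a 𝔟₁) (consF a 𝔟₂) hagq
          (psi S.f p₁ w' (consF a 𝔟₁) x) hy₁m (psi S.f p₂ w' (consF a 𝔟₂) x) hy₂m hclose
        have habs : Φ₁ ≤ Gh * Φ₂ := by
          have h1 := abs_sub_abs_le_abs_sub
            (dentry (S.f p₁ (consF a 𝔟₁)) (psi S.f p₁ w' (consF a 𝔟₁) x) ⟨0,hN⟩ ⟨0,hN⟩)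
            (dentry (S.f p₂ (consF a 𝔟₂)) (psi S.f p₂ w' (consF a 𝔟₂) x) ⟨0,hN⟩ ⟨0,hN⟩)
          rw [hΦ₁def, hΦ₂def]
          nlinarith [hb₂.1, hmd, h1]
        calc Φ₁ * lam hN S.f p₁ (consF a 𝔟₁) w' x
            ≤ (Gh * Φ₂) * (Gh ^ w'.length * (γ/γ') ^ (q - (s+1))
              * lam hN S.f p₂ (consF a 𝔟₂) w' x) :=
              mul_le_mul habs hIH hlam₁0 (by positivity)
          _ = Gh ^ (w'.length + 1) * (γ/γ') ^ (q - (s+1))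
              * (Φ₂ * lam hN S.f p₂ (consF a 𝔟₂) w' x) := by
              rw [pow_succ]
              ring
          _ ≤ Gh ^ (w'.length + 1) * (γ/γ') ^ (q - s)
              * (Φ₂ * lam hN S.f p₂ (consF a 𝔟₂) w' x) := by
              apply mul_le_mul_of_nonneg_right
                (mul_le_mul_of_nonneg_left
                  (pow_le_pow_right₀ hrr1 (by omega)) (pow_nonneg hGh0.le _))
                (mul_nonneg (abs_nonneg _) hlam₂0)
          _ = Gh ^ (a :: w').length * (γ/γ') ^ (q - s)
              * (Φ₂ * lam hN S.f p₂ (consF a 𝔟₂) w' x) := by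
              rw [List.length_cons]
      · -- bad letter
        push_neg at hgood
        have hfac : Φ₁ ≤ (γ/γ') * Φ₂ := by
          have h1 := hb₁.2
          have h2 := hb₂.1
          rw [div_mul_eq_mul_div, le_div_iff₀ hγ'0]
          nlinarith [abs_nonneg (dentry (S.f p₁ (consF a 𝔟₁))
            (psi S.f p₁ w' (consF a 𝔟₁) x) ⟨0,hN⟩ ⟨0,hN⟩)]
        calc Φ₁ * lam hN S.f p₁ (consF a 𝔟₁) w' x
            ≤ ((γ/γ') * Φ₂) * (Gh ^ w'.length * (γ/γ') ^ (q - (s+1))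
              * lam hN S.f p₂ (consF a 𝔟₂) w' x) :=
              mul_le_mul hfac hIH hlam₁0 (by positivity)
          _ = Gh ^ w'.length * (γ/γ') ^ (q - (s+1) + 1)
              * (Φ₂ * lam hN S.f p₂ (consF a 𝔟₂) w' x) := by
              rw [pow_succ]
              ring
          _ = Gh ^ w'.length * (γ/γ') ^ (q - s)
              * (Φ₂ * lam hN S.f p₂ (consF a 𝔟₂) w' x) := by
              congr 3
              omega
          _ ≤ Gh ^ (a :: w').length * (γ/γ') ^ (q - s)
              * (Φ₂ * lam hN S.f p₂ (consF a 𝔟₂) w' x) := by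
              rw [List.length_cons]
              apply mul_le_mul_of_nonneg_right
                (mul_le_mul_of_nonneg_right ?_ (pow_nonneg hrr0.le _))
                (mul_nonneg (abs_nonneg _) hlam₂0)
              calc Gh ^ w'.length = 1 * Gh ^ w'.length := (one_mul _).symm
                _ ≤ Gh * Gh ^ w'.length :=
                    mul_le_mul_of_nonneg_right hGh1.le (pow_nonneg hGh0.le _)
                _ = Gh ^ (w'.length + 1) := by rw [pow_succ]; ring
  -- sup level
  set n := w.length with hndef
  have hbdd₂ : BddAbove ((fun x => lam hN S.f p₂ 𝔞₂ w x) '' cube N) := by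
    refine ⟨γ ^ n, ?_⟩
    rintro y ⟨x, hx, rfl⟩
    exact (lam_bounds S hN hr hU hγ hp₂ w 𝔞₂ hx).2
  have hbdd₁ : BddAbove ((fun x => lam hN S.f p₁ 𝔞₁ w x) '' cube N) := by
    refine ⟨γ ^ n, ?_⟩
    rintro y ⟨x, hx, rfl⟩
    exact (lam_bounds S hN hr hU hγ hp₁ w 𝔞₁ hx).2
  have hΛ₂low : γ' ^ n ≤ Lam hN S.f p₂ 𝔞₂ w :=
    le_trans (lam_bounds S hN hr hU hγ hp₂ w 𝔞₂ zero_mem_cube).1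
      (le_csSup hbdd₂ ⟨0, zero_mem_cube, rfl⟩)
  have hΛ₁low : γ' ^ n ≤ Lam hN S.f p₁ 𝔞₁ w :=
    le_trans (lam_bounds S hN hr hU hγ hp₁ w 𝔞₁ zero_mem_cube).1
      (le_csSup hbdd₁ ⟨0, zero_mem_cube, rfl⟩)
  have hΛ₂0 : 0 < Lam hN S.f p₂ 𝔞₂ w := lt_of_lt_of_le (pow_pos hγ'0 n) hΛ₂low
  have hΛ₁0 : 0 < Lam hN S.f p₁ 𝔞₁ w := lt_of_lt_of_le (pow_pos hγ'0 n) hΛ₁low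
  have hΛ₁γ : Lam hN S.f p₁ 𝔞₁ w ≤ γ ^ n := by
    apply Real.sSup_le
    · rintro y ⟨x, hx, rfl⟩
      exact (lam_bounds S hN hr hU hγ hp₁ w 𝔞₁ hx).2
    · positivity
  have hcomp : Lam hN S.f p₁ 𝔞₁ w ≤ Gh ^ n * (γ/γ') ^ q * Lam hN S.f p₂ 𝔞₂ w := by
    apply Real.sSup_le
    · rintro y ⟨x, hx, rfl⟩
      have h1 := master w 0 𝔞₁ 𝔞₂ (by omega) x hx
      rw [Nat.sub_zero] at h1
      refine h1.trans ?_
      apply mul_le_mul_of_nonneg_left (le_csSup hbdd₂ ⟨x, hx, rfl⟩)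
        (mul_nonneg (pow_nonneg hGh0.le _) (pow_nonneg hrr0.le _))
    · apply mul_nonneg (mul_nonneg (pow_nonneg hGh0.le _) (pow_nonneg hrr0.le _)) hΛ₂0.le
  have hexp : Gh ^ n * (γ ^ n) ^ κ ≤ 1 := by
    have h1 : ((γ ^ n : ℝ)) ^ κ = γ ^ ((n:ℝ) * κ) := by
      rw [← Real.rpow_natCast γ n, ← Real.rpow_mul hγ0.le]
    have h2 : Gh ^ n = γ ^ (-(κ/2) * (n:ℝ)) := by
      rw [hGhdef, ← Real.rpow_natCast (γ ^ (-(κ/2)) : ℝ) n, ← Real.rpow_mul hγ0.le]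
    rw [h1, h2, ← Real.rpow_add hγ0]
    apply Real.rpow_le_one hγ0.le hγ1.le
    have heq : -(κ/2) * (n:ℝ) + (n:ℝ) * κ = (n:ℝ) * κ / 2 := by ring
    rw [heq]
    positivity
  have e1 : Lam hN S.f p₁ 𝔞₁ w ^ (1 + κ)
      = Lam hN S.f p₁ 𝔞₁ w * Lam hN S.f p₁ 𝔞₁ w ^ κ := by
    rw [Real.rpow_add hΛ₁0, Real.rpow_one]
  have e2 : Lam hN S.f p₁ 𝔞₁ w ^ κ ≤ ((γ:ℝ) ^ n) ^ κ :=
    Real.rpow_le_rpow hΛ₁0.le hΛ₁γ hκ0.le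
  calc Lam hN S.f p₁ 𝔞₁ w ^ (1 + κ)
      = Lam hN S.f p₁ 𝔞₁ w * Lam hN S.f p₁ 𝔞₁ w ^ κ := e1
    _ ≤ (Gh ^ n * (γ/γ') ^ q * Lam hN S.f p₂ 𝔞₂ w) * (((γ:ℝ) ^ n) ^ κ) := by
        apply mul_le_mul hcomp e2 (Real.rpow_nonneg hΛ₁0.le κ)
        apply mul_nonneg (mul_nonneg (pow_nonneg hGh0.le _) (pow_nonneg hrr0.le _)) hΛ₂0.le
    _ = ((γ/γ') ^ q * Lam hN S.f p₂ 𝔞₂ w) * (Gh ^ n * ((γ:ℝ) ^ n) ^ κ) := by ring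
    _ ≤ ((γ/γ') ^ q * Lam hN S.f p₂ 𝔞₂ w) * 1 := by
        apply mul_le_mul_of_nonneg_left hexp
        apply mul_nonneg (pow_nonneg hrr0.le _) hΛ₂0.le
    _ = (γ/γ') ^ q * Lam hN S.f p₂ 𝔞₂ w := mul_one _


end Paper
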